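/- arXiv:1811.05385 — 4 statements merged into one kernel-verified Lean document; each statement's English description precedes it below -/
import Mathlib

section
/- Given nonnegative reals g_{i,l,k-1} with Σ_l g²_{i,l,k−1} ≤ G² and Σ_{l > h} g²_{i,l,k−1} ≤ F², we have √(Σ_{l≥0} (l/N)·g²_{i,l,k−1}) ≤ √(h/N)·G + F. -/
theorem weighted_tail_split
    (N h G F : ℝ) (hN : 0 < N) (hh : 0 ≤ h) (hG : 0 ≤ G) (hF : 0 ≤ F)
    (a : ℕ → ℝ) (hnonneg : ∀ l, 0 ≤ a l)
    (hsupp : ∀ l : ℕ, (N : ℝ) < l → a l = 0)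
    (htotal : ∑' l : ℕ, (a l) ^ 2 ≤ G ^ 2)
    (htail : ∑' l : ℕ, (if h < (l : ℝ) then (a l) ^ 2 else 0) ≤ F ^ 2) :
    Real.sqrt (∑' l : ℕ, ((l : ℝ) / N) * (a l) ^ 2)
      ≤ Real.sqrt (h / N) * G + F := by
  set s : Finset ℕ := Finset.range (⌈N⌉₊ + 1) with hs
  have hzero : ∀ (f : ℕ → ℝ), (∀ l, a l = 0 → f l = 0) →
      ∀ l ∉ s, f l = 0 := by
    intro f hf l hl
    apply hf
    apply hsupp
    have : ⌈N⌉₊ < l := by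
      simp [hs, Finset.mem_range] at hl; omega
    calc N ≤ (⌈N⌉₊ : ℝ) := Nat.le_ceil N
    _ < l := by exact_mod_cast this
  have hsum1 : Summable (fun l : ℕ => ((l : ℝ) / N) * (a l) ^ 2) :=
    summable_of_ne_finset_zero (s := s) (hzero _ (by intro l h0; simp [h0]))
  have hsum2 : Summable (fun l : ℕ => (if h < (l : ℝ) then (a l) ^ 2 else 0)) :=
    summable_of_ne_finset_zero (s := s) (hzero _ (by intro l h0; simp [h0]))
  have hsum3 : Summable (fun l : ℕ => (if (l : ℝ) ≤ h then ((l : ℝ) / N) * (a l) ^ 2 else 0)) :=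
    summable_of_ne_finset_zero (s := s) (hzero _ (by intro l h0; simp [h0]))
  have hsum4 : Summable (fun l : ℕ => (if h < (l : ℝ) then ((l : ℝ) / N) * (a l) ^ 2 else 0)) :=
    summable_of_ne_finset_zero (s := s) (hzero _ (by intro l h0; simp [h0]))
  have hsplit : (∑' l : ℕ, ((l : ℝ) / N) * (a l) ^ 2)
      = (∑' l : ℕ, (if (l : ℝ) ≤ h then ((l : ℝ) / N) * (a l) ^ 2 else 0))
      + (∑' l : ℕ, (if h < (l : ℝ) then ((l : ℝ) / N) * (a l) ^ 2 else 0)) := by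
    rw [← Summable.tsum_add hsum3 hsum4]
    congr 1; funext l
    by_cases hc : (l : ℝ) ≤ h
    · simp [hc, not_lt.2 hc]
    · simp [hc, not_le.1 hc]
  have hA : (∑' l : ℕ, (if (l : ℝ) ≤ h then ((l : ℝ) / N) * (a l) ^ 2 else 0))
      ≤ (h / N) * G ^ 2 := by
    calc (∑' l : ℕ, (if (l : ℝ) ≤ h then ((l : ℝ) / N) * (a l) ^ 2 else 0))
        ≤ ∑' l : ℕ, (h / N) * (a l) ^ 2 := by
          apply Summable.tsum_le_tsum _ hsum3
          · exact Summable.mul_left _ (summable_of_ne_finset_zero (s := s)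
              (hzero _ (by intro l h0; simp [h0])))
          intro l
          by_cases hc : (l : ℝ) ≤ h
          · simp only [hc, if_true]
            apply mul_le_mul_of_nonneg_right _ (sq_nonneg _)
            gcongr
          · simp only [hc, if_false]
            positivity
      _ = (h / N) * ∑' l : ℕ, (a l) ^ 2 := by rw [tsum_mul_left]
      _ ≤ (h / N) * G ^ 2 := by
          apply mul_le_mul_of_nonneg_left htotal (by positivity)
  have hB : (∑' l : ℕ, (if h < (l : ℝ) then ((l : ℝ) / N) * (a l) ^ 2 else 0)) ≤ F ^ 2 := by
    refine le_trans (Summable.tsum_le_tsum ?_ hsum4 hsum2) htail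
    intro l
    by_cases hc : h < (l : ℝ)
    · simp only [hc, if_true]
      by_cases ha : a l = 0
      · simp [ha]
      · have hlN : (l : ℝ) ≤ N := by
          by_contra hcon
          exact ha (hsupp l (not_le.1 hcon))
        have : (l : ℝ) / N ≤ 1 := div_le_one_of_le₀ hlN hN.le
        nlinarith [sq_nonneg (a l)]
    · simp [hc]
  have hnn : 0 ≤ ∑' l : ℕ, (if h < (l : ℝ) then ((l : ℝ) / N) * (a l) ^ 2 else 0) :=
    tsum_nonneg (fun l => by positivity)
  have hnnA : 0 ≤ ∑' l : ℕ, (if (l : ℝ) ≤ h then ((l : ℝ) / N) * (a l) ^ 2 else 0) :=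
    tsum_nonneg (fun l => by positivity)
  rw [hsplit]
  calc Real.sqrt (_ + _) ≤ Real.sqrt ((h / N) * G ^ 2 + F ^ 2) := by
        apply Real.sqrt_le_sqrt; linarith
    _ ≤ Real.sqrt ((h / N) * G ^ 2) + Real.sqrt (F ^ 2) := by
        have h1 : (0:ℝ) ≤ (h / N) * G ^ 2 := by positivity
        have h2 : (0:ℝ) ≤ F ^ 2 := sq_nonneg F
        calc Real.sqrt ((h / N) * G ^ 2 + F ^ 2)
            ≤ Real.sqrt ((Real.sqrt ((h / N) * G ^ 2) + Real.sqrt (F ^ 2)) ^ 2) := by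
              apply Real.sqrt_le_sqrt
              nlinarith [Real.sq_sqrt h1, Real.sq_sqrt h2,
                Real.sqrt_nonneg ((h / N) * G ^ 2), Real.sqrt_nonneg (F ^ 2)]
          _ = _ := Real.sqrt_sq (by positivity)
    _ = Real.sqrt (h / N) * G + F := by
        rw [Real.sqrt_mul (by positivity), Real.sqrt_sq hG, Real.sqrt_sq hF]
end

section
/- If g(i,k) ≤ Σ_{0≤l<i} c(l)·g(l,k−1) + ε for all i, k ≥ 1, with g(i,0) ≤ 1, then g(i,k) ≤ A_i^k/k! + ε·Σ_{t=0}^{k−1} A_i^t/t! ≤ A_i^k/k! + ε·e^{A_i}, where A_i = Σ_{l=0}^{i−1} c(l). -/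
private lemma pow_step_aux (a b : ℝ) (k : ℕ) (ha : 0 ≤ a) (hab : a ≤ b) :
    (k + 1 : ℝ) * a ^ k * (b - a) ≤ b ^ (k + 1) - a ^ (k + 1) := by
  have h := geom_sum₂_mul b a (k + 1)
  rw [← h]
  have hterm : ∀ i ∈ Finset.range (k + 1), a ^ k ≤ b ^ i * a ^ (k + 1 - 1 - i) := by
    intro i hi
    simp only [Finset.mem_range] at hi
    have : a ^ k = a ^ i * a ^ (k - i) := by
      rw [← pow_add]; congr 1; omega
    rw [this]
    have h1 : a ^ i ≤ b ^ i := pow_le_pow_left₀ ha hab i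
    have h2 : (k + 1 - 1 - i) = k - i := by omega
    rw [h2]
    exact mul_le_mul_of_nonneg_right h1 (pow_nonneg ha _)
  have hsum : (k + 1 : ℝ) * a ^ k ≤ ∑ i ∈ Finset.range (k + 1), b ^ i * a ^ (k + 1 - 1 - i) := by
    calc (k + 1 : ℝ) * a ^ k = ∑ _i ∈ Finset.range (k + 1), a ^ k := by
          simp [Finset.sum_const, mul_comm]
      _ ≤ _ := Finset.sum_le_sum hterm
  exact mul_le_mul_of_nonneg_right hsum (by linarith)

private lemma exp_tele (c : ℕ → ℝ) (hcnonneg : ∀ l, 0 ≤ c l) (i : ℕ) :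
    ∑ l ∈ Finset.range i, c l * Real.exp (∑ m ∈ Finset.range l, c m)
      ≤ Real.exp (∑ l ∈ Finset.range i, c l) - 1 := by
  induction i with
  | zero => simp
  | succ n ih =>
    rw [Finset.sum_range_succ, Finset.sum_range_succ (f := c)]
    set A := ∑ m ∈ Finset.range n, c m
    have h1 : c n + 1 ≤ Real.exp (c n) := Real.add_one_le_exp (c n)
    have h2 : Real.exp A * (c n + 1) ≤ Real.exp A * Real.exp (c n) :=
      mul_le_mul_of_nonneg_left h1 (Real.exp_pos A).le
    rw [← Real.exp_add] at h2
    nlinarith [Real.exp_pos A]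

private lemma pow_tele (c : ℕ → ℝ) (hcnonneg : ∀ l, 0 ≤ c l) (k i : ℕ) :
    ∑ l ∈ Finset.range i, c l * (∑ m ∈ Finset.range l, c m) ^ k
      ≤ (∑ l ∈ Finset.range i, c l) ^ (k + 1) / (k + 1) := by
  induction i with
  | zero => simp
  | succ n ih =>
    rw [Finset.sum_range_succ, Finset.sum_range_succ (f := c)]
    set A := ∑ m ∈ Finset.range n, c m with hA
    have hA0 : 0 ≤ A := Finset.sum_nonneg fun l _ => hcnonneg l
    have hstep := pow_step_aux A (A + c n) k hA0 (by linarith [hcnonneg n])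
    have hk : (0:ℝ) < k + 1 := by positivity
    calc ∑ l ∈ Finset.range n, c l * (∑ m ∈ Finset.range l, c m) ^ k + c n * A ^ k
        ≤ A ^ (k + 1) / (k + 1) + c n * A ^ k := by linarith [ih]
      _ ≤ (A + c n) ^ (k + 1) / (k + 1) := by
          rw [div_add' _ _ _ hk.ne', div_le_div_iff₀ hk hk]
          nlinarith [hstep]

theorem iterated_recurrence_closed_form
    (c : ℕ → ℝ) (ε : ℝ) (g : ℕ → ℕ → ℝ)
    (hcnonneg : ∀ l, 0 ≤ c l) (hε : 0 ≤ ε)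
    (hgnonneg : ∀ i k, 0 ≤ g i k)
    (hbase0 : ∀ i, g i 0 ≤ 1)
    (hbase : ∀ k, 1 ≤ k → g 0 k = 0)
    (hrec : ∀ i k, 1 ≤ i → 1 ≤ k →
      g i k ≤ (∑ l ∈ Finset.range i, c l * g l (k - 1)) + ε) :
    ∀ i k : ℕ,
      g i k ≤ (∑ l ∈ Finset.range i, c l) ^ k / (Nat.factorial k : ℝ)
        + ε * Real.exp (∑ l ∈ Finset.range i, c l) := by
  intro i k
  induction k generalizing i with
  | zero =>
    have hA : (0:ℝ) ≤ ∑ l ∈ Finset.range i, c l :=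
      Finset.sum_nonneg fun l _ => hcnonneg l
    have : (0:ℝ) ≤ ε * Real.exp (∑ l ∈ Finset.range i, c l) := by positivity
    simpa using (hbase0 i).trans (by linarith)
  | succ k ih =>
    set A := ∑ l ∈ Finset.range i, c l with hAdef
    have hA : (0:ℝ) ≤ A := Finset.sum_nonneg fun l _ => hcnonneg l
    rcases Nat.eq_zero_or_pos i with hi | hi
    · subst hi
      have : g 0 (k + 1) = 0 := hbase (k + 1) (by omega)
      rw [this]
      have : (0:ℝ) ≤ A ^ (k + 1) / (Nat.factorial (k + 1) : ℝ) := by positivity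
      positivity
    · have hrec' := hrec i (k + 1) hi (by omega)
      simp only [Nat.add_sub_cancel] at hrec'
      have hsum1 : ∑ l ∈ Finset.range i, c l * g l k
          ≤ ∑ l ∈ Finset.range i, c l *
            ((∑ m ∈ Finset.range l, c m) ^ k / (Nat.factorial k : ℝ)
              + ε * Real.exp (∑ m ∈ Finset.range l, c m)) := by
        apply Finset.sum_le_sum
        intro l _
        exact mul_le_mul_of_nonneg_left (ih l) (hcnonneg l)
      have hfac : (0:ℝ) < (Nat.factorial k : ℝ) := by
        exact_mod_cast Nat.factorial_pos k
      have hpow := pow_tele c hcnonneg k i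
      have hexp := exp_tele c hcnonneg i
      have hsplit : ∑ l ∈ Finset.range i, c l *
            ((∑ m ∈ Finset.range l, c m) ^ k / (Nat.factorial k : ℝ)
              + ε * Real.exp (∑ m ∈ Finset.range l, c m))
          = (∑ l ∈ Finset.range i, c l * (∑ m ∈ Finset.range l, c m) ^ k)
              / (Nat.factorial k : ℝ)
            + ε * ∑ l ∈ Finset.range i, c l * Real.exp (∑ m ∈ Finset.range l, c m) := by
        rw [Finset.sum_div, Finset.mul_sum]
        rw [← Finset.sum_add_distrib]
        congr 1
        ext l
        ring
      have hfinal : (∑ l ∈ Finset.range i, c l * (∑ m ∈ Finset.range l, c m) ^ k)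
              / (Nat.factorial k : ℝ)
          ≤ A ^ (k + 1) / (Nat.factorial (k + 1) : ℝ) := by
        have : (Nat.factorial (k + 1) : ℝ) = (k + 1) * (Nat.factorial k : ℝ) := by
          rw [Nat.factorial_succ]; push_cast; ring
        rw [this, ← div_div]
        exact (div_le_div_iff_of_pos_right hfac).mpr hpow
      have hexp2 : ε * ∑ l ∈ Finset.range i, c l * Real.exp (∑ m ∈ Finset.range l, c m)
          ≤ ε * (Real.exp A - 1) := mul_le_mul_of_nonneg_left hexp hε
      calc g i (k + 1) ≤ (∑ l ∈ Finset.range i, c l * g l k) + ε := hrec'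
        _ ≤ (∑ l ∈ Finset.range i, c l * (∑ m ∈ Finset.range l, c m) ^ k)
              / (Nat.factorial k : ℝ)
            + ε * ∑ l ∈ Finset.range i, c l * Real.exp (∑ m ∈ Finset.range l, c m) + ε := by
            rw [← hsplit]; linarith
        _ ≤ A ^ (k + 1) / (Nat.factorial (k + 1) : ℝ) + ε * (Real.exp A - 1) + ε := by
            linarith
        _ = A ^ (k + 1) / (Nat.factorial (k + 1) : ℝ) + ε * Real.exp A := by ring
end

section
/- With h_3(l) = max{2e·l^{3/2}/√N, 10·N^{1/8}}, the sum A_i = Σ_{l=0}^{i−1} √(h_3(l)/N) satisfies A_i ≤ √(2e)·i^{7/4}/N^{3/4} + C·N^{−1/48} for some absolute constant C, for all i ≤ N^{1/2}. -/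
/-!
Bound the maximum by the sum of its branches only where it matters: once
`l ≥ 2 N^{5/12}` the term `2e l^{3/2}/√N` already dominates `10 N^{1/8}`. Each of the `i` terms
coming from the first branch is at most its value at `l = i`, which gives the main term
`√(2e) i^{7/4} / N^{3/4}`, while the at most `3 N^{5/12}` early terms each contribute
`√(10 N^{1/8}/N) ≤ 4 N^{-7/16}`, a total of `12 N^{-1/48}`.
-/

open Real Finset

theorem sum_range_sqrt_max_le {a : ℕ → ℝ} {b : ℝ} {m : ℕ} (hm : ∀ l, m ≤ l → b ≤ a l) (i : ℕ) :
    ∑ l ∈ range i, √(max (a l) b) ≤ ∑ l ∈ range i, √(a l) + m * √b := by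
  have pointwise : ∀ l ∈ range i, √(max (a l) b) ≤ √(a l) + if l < m then √b else 0 := by
    intro l _
    split_ifs with hl
    · rw [sqrt_monotone.map_max]
      exact max_le_add_of_nonneg (sqrt_nonneg _) (sqrt_nonneg _)
    · rw [max_eq_left (hm l (not_lt.1 hl)), add_zero]
  have head : ∑ l ∈ range i, (if l < m then √b else 0) ≤ m * √b := calc
    _ = ∑ l ∈ range i with l < m, √b := (sum_filter _ _).symm
    _ ≤ ∑ l ∈ range m, √b := sum_le_sum_of_subset_of_nonneg
          (fun l hl => mem_range.2 (mem_filter.1 hl).2) fun _ _ _ => sqrt_nonneg b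
    _ = m * √b := by simp
  calc _ ≤ ∑ l ∈ range i, (√(a l) + if l < m then √b else 0) := sum_le_sum pointwise
    _ ≤ _ := by rw [sum_add_distrib]; gcongr

theorem sum_range_sqrt_mul_rpow_le {c p : ℝ} (hc : 0 ≤ c) (hp : 0 ≤ p) (i : ℕ) :
    ∑ l ∈ range i, √(c * (l : ℝ) ^ p) ≤ √c * (i : ℝ) ^ (p / 2 + 1) := calc
  _ ≤ #(range i) • √(c * (i : ℝ) ^ p) := sum_le_card_nsmul _ _ _ fun l hl => by
        gcongr; exact_mod_cast (mem_range.1 hl).le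
  _ = _ := by
        rw [card_range, nsmul_eq_mul, sqrt_mul hc, sqrt_eq_rpow (_ ^ p),
          ← rpow_mul (Nat.cast_nonneg _), rpow_add' (Nat.cast_nonneg _) (by positivity), rpow_one]
        ring_nf

theorem sqrt_div_sqrt_div (x : ℝ) {N : ℝ} (hN : 0 ≤ N) : √(x / √N / N) = √x / N ^ (3 / 4 : ℝ) := by
  rw [div_div, sqrt_div' x (by positivity), sqrt_mul (sqrt_nonneg N), sqrt_eq_rpow √N,
    sqrt_eq_rpow N, ← rpow_mul hN, ← rpow_add' hN (by norm_num)]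
  norm_num

theorem ten_mul_rpow_le_of_two_mul_rpow_le {N l : ℝ} (hN : 0 < N) (hl : 2 * N ^ (5 / 12 : ℝ) ≤ l) :
    10 * N ^ (1 / 8 : ℝ) ≤ 2 * exp 1 * l ^ (3 / 2 : ℝ) / √N := by
  have two_le : (2 : ℝ) ≤ 2 ^ (3 / 2 : ℝ) := by
    simpa using rpow_le_rpow_of_exponent_le (x := 2) (by norm_num) (by norm_num : (1 : ℝ) ≤ 3 / 2)
  have hpow : (2 * N ^ (5 / 12 : ℝ)) ^ (3 / 2 : ℝ) = 2 ^ (3 / 2 : ℝ) * (N ^ (1 / 8 : ℝ) * √N) := by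
    rw [mul_rpow (by norm_num) (by positivity), ← rpow_mul hN.le, sqrt_eq_rpow, ← rpow_add hN]
    norm_num
  have he := exp_one_gt_d9
  rw [le_div_iff₀ (sqrt_pos.2 hN)]
  calc 10 * N ^ (1 / 8 : ℝ) * √N ≤ 2 * exp 1 * (2 * N ^ (5 / 12 : ℝ)) ^ (3 / 2 : ℝ) := by
        rw [hpow, mul_assoc, ← mul_assoc (2 * exp 1)]; gcongr; nlinarith
    _ ≤ _ := by gcongr

theorem natCeil_mul_sqrt_le {N : ℝ} (hN : 1 ≤ N) :
    (⌈2 * N ^ (5 / 12 : ℝ)⌉₊ : ℝ) * √(10 * N ^ (1 / 8 : ℝ) / N) ≤ 12 * N ^ (-1 / 48 : ℝ) := by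
  have hN0 : 0 < N := by linarith
  have ceil_le : (⌈2 * N ^ (5 / 12 : ℝ)⌉₊ : ℝ) ≤ 3 * N ^ (5 / 12 : ℝ) := by
    have := Nat.ceil_lt_add_one (by positivity : 0 ≤ 2 * N ^ (5 / 12 : ℝ))
    have := one_le_rpow hN (by norm_num : (0 : ℝ) ≤ 5 / 12)
    linarith
  have sqrt_le : √(10 * N ^ (1 / 8 : ℝ) / N) ≤ 4 * N ^ (-7 / 16 : ℝ) := by
    rw [mul_div_assoc, ← rpow_sub_one hN0.ne', sqrt_mul (by norm_num), sqrt_eq_rpow (_ ^ _),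
      ← rpow_mul hN0.le]
    have : √10 ≤ 4 := by rw [sqrt_le_left (by norm_num)]; norm_num
    norm_num
    gcongr
  calc _ ≤ 3 * N ^ (5 / 12 : ℝ) * (4 * N ^ (-7 / 16 : ℝ)) := by gcongr
    _ = 12 * N ^ (-1 / 48 : ℝ) := by
      rw [mul_mul_mul_comm, ← rpow_add hN0]; norm_num

theorem A_i_bound :
    ∃ C : ℝ, 0 < C ∧ ∀ N : ℝ, 2 ≤ N → ∀ i : ℕ, 1 ≤ i → (i : ℝ) ≤ Real.sqrt N →
      (∑ l ∈ Finset.range i,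
          Real.sqrt ((max (2 * Real.exp 1 * (l : ℝ) ^ ((3 : ℝ) / 2) / Real.sqrt N)
              (10 * N ^ ((1 : ℝ) / 8))) / N))
        ≤ Real.sqrt (2 * Real.exp 1) * (i : ℝ) ^ ((7 : ℝ) / 4) / N ^ ((3 : ℝ) / 4)
            + C * N ^ (-(1 : ℝ) / 48) := by
  refine ⟨12, by norm_num, fun N hN i _ _ => ?_⟩
  have hN0 : 0 < N := by linarith
  simp_rw [← max_div_div_right hN0.le]
  calc _ ≤ ∑ l ∈ range i, √(2 * exp 1 * (l : ℝ) ^ (3 / 2 : ℝ) / √N / N)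
        + ⌈2 * N ^ (5 / 12 : ℝ)⌉₊ * √(10 * N ^ (1 / 8 : ℝ) / N) :=
        sum_range_sqrt_max_le (fun l hl => div_le_div_of_nonneg_right
          (ten_mul_rpow_le_of_two_mul_rpow_le hN0 (Nat.ceil_le.1 hl)) hN0.le) i
    _ ≤ _ := by
      gcongr ?_ + ?_
      · simp_rw [sqrt_div_sqrt_div _ hN0.le, ← sum_div]
        gcongr
        exact (sum_range_sqrt_mul_rpow_le (by positivity) (by norm_num) i).trans_eq (by norm_num)
      · exact natCeil_mul_sqrt_le (by linarith)
end

section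
/- If A_i ≤ √(2e)·i^{7/4}/N^{3/4} + o(1) and j ≤ N^{1/8}, then choosing i* as the largest integer with A_{i*} < j/(2e) gives i* = O(j^{4/7}·N^{3/7}), and the 3-collision amplitude bound g(i*,j) ≤ (e·A_{i*}/j)^j + 2^{−N^{1/8}} is at most 2^{−j+1} + 2^{−N^{1/8}}. -/
open Real Nat

/-- Equivalent to `k! ≥ (k/e)^k`, which is `k^k/k! ≤ e^k`. -/
theorem pow_div_factorial_le_exp_one_mul_div_pow {a : ℝ} (ha : 0 ≤ a) (k : ℕ) :
    a ^ k / k ! ≤ (exp 1 * a / k) ^ k := by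
  rcases k.eq_zero_or_pos with rfl | hk
  · simp
  have hk' : (0 : ℝ) < k := by exact_mod_cast hk
  have hkk : (k : ℝ) ^ k / k ! ≤ exp 1 ^ k := by
    simpa [← exp_nat_mul] using pow_div_factorial_le_exp (k : ℝ) hk'.le k
  calc a ^ k / k !
      = (exp 1 * a / k) ^ k * ((k : ℝ) ^ k / k !) / exp 1 ^ k := by
        rw [div_pow, mul_pow]; field_simp
    _ ≤ (exp 1 * a / k) ^ k * exp 1 ^ k / exp 1 ^ k := by gcongr
    _ = (exp 1 * a / k) ^ k := by field_simp

theorem exp_one_mul_div_pow_le_two_rpow_one_sub {a : ℝ} {k : ℕ} (ha : 0 ≤ a)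
    (hak : a ≤ k / (2 * exp 1)) : (exp 1 * a / k) ^ k ≤ (2 : ℝ) ^ (1 - (k : ℝ)) := by
  have hhalf : exp 1 * a / k ≤ 1 / 2 := by
    rcases (Nat.cast_nonneg (α := ℝ) k).eq_or_lt with hk | hk
    · rw [← hk, div_zero]; norm_num
    rw [div_le_iff₀ hk]
    rw [le_div_iff₀ (by positivity)] at hak
    linarith
  calc (exp 1 * a / k) ^ k ≤ (1 / 2) ^ k := by gcongr
    _ = (2 : ℝ) ^ (-(k : ℝ)) := by
        rw [one_div, inv_pow, ← rpow_natCast, rpow_neg zero_le_two]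
    _ ≤ (2 : ℝ) ^ (1 - (k : ℝ)) := rpow_le_rpow_of_exponent_le one_le_two (by linarith)

theorem three_collision_final_bound_general
    (N : ℝ) (j : ℕ)
    (A : ℕ → ℝ) (hAnonneg : ∀ i, 0 ≤ A i)
    (g : ℕ → ℕ → ℝ)
    (hgbound : ∀ i : ℕ, g i j ≤ (A i) ^ j / (Nat.factorial j : ℝ)
        + 2 ^ (-(N ^ ((1 : ℝ) / 8))))
    (i : ℕ) (hAi : A i ≤ (j : ℝ) / (2 * Real.exp 1)) :
    g i j ≤ 2 ^ (1 - (j : ℝ)) + 2 ^ (-(N ^ ((1 : ℝ) / 8))) := by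
  calc g i j ≤ A i ^ j / j ! + 2 ^ (-(N ^ ((1 : ℝ) / 8))) := hgbound i
    _ ≤ (exp 1 * A i / j) ^ j + 2 ^ (-(N ^ ((1 : ℝ) / 8))) := by
        gcongr; exact pow_div_factorial_le_exp_one_mul_div_pow (hAnonneg i) j
    _ ≤ 2 ^ (1 - (j : ℝ)) + 2 ^ (-(N ^ ((1 : ℝ) / 8))) := by
        gcongr; exact exp_one_mul_div_pow_le_two_rpow_one_sub (hAnonneg i) hAi

theorem three_collision_final_bound
    (N : ℝ) (hN : 2 ≤ N) (j : ℕ) (hj : 1 ≤ j) (hjN : (j : ℝ) ≤ N ^ ((1 : ℝ) / 8))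
    (A : ℕ → ℝ) (hAnonneg : ∀ i, 0 ≤ A i) (hAmono : Monotone A)
    (g : ℕ → ℕ → ℝ) (hgnonneg : ∀ i k, 0 ≤ g i k)
    (hgbound : ∀ i : ℕ, g i j ≤ (A i) ^ j / (Nat.factorial j : ℝ)
        + 2 ^ (-(N ^ ((1 : ℝ) / 8))))
    (i : ℕ) (hAi : A i ≤ (j : ℝ) / (2 * Real.exp 1)) :
    g i j ≤ 2 ^ (1 - (j : ℝ)) + 2 ^ (-(N ^ ((1 : ℝ) / 8))) :=
  three_collision_final_bound_general N j A hAnonneg g hgbound i hAi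
end
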